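/- arXiv:1107.2059 — 5 statements merged into one kernel-verified Lean document; each statement's English description precedes it below -/
import Mathlib

section
/- Let F_q be a finite field with q elements, c ∈ F_q a primitive element (a generator of the multiplicative group F_q^×), and let n, r be integers with 1 ≤ r < n ≤ q−1. Let a_1, …, a_n ∈ F_q^× and assume that the binomial coefficients C(r,j) are nonzero as elements of F_q for all 0 ≤ j ≤ r. Set G(z) = ( a_1^r (z+1)^r, a_2^r (z+c)^r, a_3^r (z+c^2)^r, …, a_n^r (z+c^{n−1})^r ) ∈ F_q[z]^n. Then G(z) is a canonical (basic and minimal) generator matrix of the one-dimensional convolutional code C = F_q(z)·G(z) ⊆ F_q(z)^n, C has degree r, and the free distance of C equals n(r+1); hence C is an MDS convolutional code with parameters (n, 1, r). -/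
/-!
Two entries of `G` are coprime, so `G` is unimodular: a polynomial vector in the `F(z)`-span of
`G` is `u • G` for a polynomial `u`. This makes `F[z]ⁿ / F[z] G` torsion-free, hence free, and
gives minimality of the row degree.

For the distance, the coefficient of `z ^ t` in `u(z) (z + γ) ^ r`, as a polynomial in `γ`, is a
power of `γ` times a nonzero polynomial whose degree is at most the spread of the support of `u`
in the window `[t - r, t]`; so it vanishes at no more than that many of the distinct nonzero
points `γᵢ = cⁱ`. With `m`, `M` the lowest and highest degree of `u`, summing over
`t ∈ [m, M + r]` gives weight at least `n (r + 1)`: by double counting the windows when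
`M - m ≤ r`, and from the first and the last `r + 1` coefficients alone otherwise.
-/

open Polynomial Finset

/-- The vector of rational functions obtained from a vector of polynomials. -/
noncomputable def liftVec {F : Type*} [Field F] {n : ℕ} (x : Fin n → Polynomial F) :
    Fin n → RatFunc F :=
  fun i => algebraMap (Polynomial F) (RatFunc F) (x i)

/-- The weight of a polynomial vector `x(z) = Σ_t x_t z^t` is `Σ_t w_H(x_t)`. -/
noncomputable def polyWeight {F : Type*} [Field F] [DecidableEq F] {n : ℕ}
    (x : Fin n → Polynomial F) : ℕ :=
  ∑ t ∈ Finset.range ((Finset.univ.sup fun i => (x i).natDegree) + 1),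
    hammingNorm (fun i => (x i).coeff t)

theorem Nat.sum_Icc_min_add_one_sub_max (r m M : ℕ) :
    ∑ t ∈ Icc m (M + r), (min t M + 1 - max m (t - r)) = (M + 1 - m) * (r + 1) := by
  have key := sum_card_bipartiteAbove_eq_sum_card_bipartiteBelow
    (fun s t => s ≤ t ∧ t ≤ s + r) (s := Icc m M) (t := Icc m (M + r))
  have above : ∀ s ∈ Icc m M,
      (bipartiteAbove (fun s t => s ≤ t ∧ t ≤ s + r) (Icc m (M + r)) s).card = r + 1 := by
    intro s hs
    rw [mem_Icc] at hs
    rw [bipartiteAbove, show filter _ _ = Icc s (s + r) by ext; simp; omega, Nat.card_Icc]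
    omega
  have below : ∀ t ∈ Icc m (M + r),
      (bipartiteBelow (fun s t => s ≤ t ∧ t ≤ s + r) (Icc m M) t).card =
        min t M + 1 - max m (t - r) := by
    intro t ht
    rw [bipartiteBelow, show filter _ _ = Icc (max m (t - r)) (min t M) by ext; simp; omega,
      Nat.card_Icc]
  rw [sum_congr rfl above, sum_congr rfl below, sum_const, Nat.card_Icc, smul_eq_mul] at key
  exact key.symm

theorem mul_succ_le_sum_Icc (n r m M : ℕ) (f : ℕ → ℕ) (hrn : r ≤ n) (hmM : m ≤ M)
    (hf : ∀ t, m ≤ t → t ≤ M + r → (t ≤ m + r ∨ M ≤ t) →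
      n - (min t M - max m (t - r)) ≤ f t) :
    n * (r + 1) ≤ ∑ t ∈ Icc m (M + r), f t := by
  obtain ⟨g, rfl⟩ := Nat.exists_eq_add_of_le hmM
  by_cases hg : g ≤ r
  · set ℓ : ℕ → ℕ := fun t => min t (m + g) - max m (t - r)
    have hsum :
        ∑ t ∈ Icc m (m + g + r), (n - ℓ t) + (g + 1) * (r + 1) = (g + r + 1) * (n + 1) := by
      have := Nat.sum_Icc_min_add_one_sub_max r m (m + g)
      rw [show m + g + 1 - m = g + 1 by omega] at this
      rw [← this, ← sum_add_distrib, sum_congr rfl (g := fun _ => n + 1), sum_const,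
        Nat.card_Icc]
      · simp only [smul_eq_mul]; congr 1; omega
      · intro t ht; rw [mem_Icc] at ht; simp only [ℓ]; omega
    calc n * (r + 1) ≤ ∑ t ∈ Icc m (m + g + r), (n - ℓ t) := by
          nlinarith [Nat.mul_le_mul_left g hrn]
      _ ≤ ∑ t ∈ Icc m (m + g + r), f t :=
          sum_le_sum fun t ht => by rw [mem_Icc] at ht; exact hf t ht.1 ht.2 (by omega)
  · -- `[m, m + r]` and `[m + g, m + g + r]` are disjoint; pair `t` with `t + g`
    have hshift : ∑ t ∈ Icc (m + g) (m + g + r), f t = ∑ t ∈ Icc m (m + r), f (t + g) := by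
      rw [Nat.add_right_comm m g r, ← map_add_right_Icc, sum_map]
      rfl
    calc n * (r + 1) = ∑ t ∈ Icc m (m + r), n := by
          rw [sum_const, Nat.card_Icc, smul_eq_mul, show m + r + 1 - m = r + 1 by omega,
            mul_comm]
      _ ≤ ∑ t ∈ Icc m (m + r), (f t + f (t + g)) := by
          refine sum_le_sum fun t ht => ?_
          rw [mem_Icc] at ht
          have h1 := hf t ht.1 (by omega) (Or.inl ht.2)
          have h2 := hf (t + g) (by omega) (by omega) (Or.inr (by omega))
          omega
      _ = ∑ t ∈ Icc m (m + r) ∪ Icc (m + g) (m + g + r), f t := by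
          rw [sum_union (disjoint_left.mpr fun t h1 h2 => by rw [mem_Icc] at h1 h2; omega),
            hshift, sum_add_distrib]
      _ ≤ ∑ t ∈ Icc m (m + g + r), f t := by
          refine sum_le_sum_of_subset fun t ht => ?_
          rw [mem_union, mem_Icc, mem_Icc] at ht; rw [mem_Icc]; omega

namespace Polynomial

variable {R : Type*} [CommRing R]

/-- The coefficient of `X ^ t` in `u * (X + C y) ^ r`, as a polynomial in `y`. -/
noncomputable def coeffMulXAddCPow (u : R[X]) (r t : ℕ) : R[X] :=
  ∑ s ∈ u.support with s ≤ t ∧ t ≤ s + r,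
    C (u.coeff s * r.choose (t - s)) * X ^ (r - (t - s))

theorem coeff_mul_X_add_C_pow_eq_eval (u : R[X]) (r t : ℕ) (y : R) :
    (u * (X + C y) ^ r).coeff t = (coeffMulXAddCPow u r t).eval y := by
  have hsub : {s ∈ u.support | s ≤ t ∧ t ≤ s + r} ⊆ range (t + 1) :=
    fun s hs => by rw [mem_filter] at hs; rw [mem_range]; omega
  rw [coeffMulXAddCPow, eval_finsetSum, coeff_mul, Nat.sum_antidiagonal_eq_sum_range_succ_mk,
    ← sum_subset hsub]
  · refine sum_congr rfl fun s _ => ?_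
    simp only [coeff_X_add_C_pow, eval_mul, eval_C, eval_pow, eval_X]
    ring
  · intro s hs hns
    rw [mem_range] at hs
    rw [mem_filter, not_and] at hns
    by_cases hu : u.coeff s = 0
    · rw [hu, zero_mul]
    · have := hns (mem_support_iff.mpr hu)
      rw [coeff_X_add_C_pow, Nat.choose_eq_zero_of_lt (by omega), Nat.cast_zero, mul_zero,
        mul_zero]

theorem natDegree_coeffMulXAddCPow_le (u : R[X]) (r t : ℕ) :
    (coeffMulXAddCPow u r t).natDegree ≤ r + min t u.natDegree - t :=
  natDegree_sum_le_of_forall_le _ _ fun s hs => by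
    rw [mem_filter] at hs
    have := le_natDegree_of_mem_supp s hs.1
    exact (natDegree_C_mul_X_pow_le _ _).trans (by omega)

theorem le_natTrailingDegree_coeffMulXAddCPow {u : R[X]} {r t : ℕ}
    (h : coeffMulXAddCPow u r t ≠ 0) :
    r + max u.natTrailingDegree (t - r) - t ≤ (coeffMulXAddCPow u r t).natTrailingDegree :=
  le_natTrailingDegree h fun e he => by
    rw [coeffMulXAddCPow, finsetSum_coeff]
    refine sum_eq_zero fun s hs => ?_
    rw [mem_filter] at hs
    have := natTrailingDegree_le_of_mem_supp s hs.1
    rw [coeff_C_mul_X_pow, if_neg (by omega)]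

theorem coeffMulXAddCPow_ne_zero [IsDomain R] {u : R[X]} {r t s : ℕ}
    (hbin : ∀ j ≤ r, (r.choose j : R) ≠ 0) (hs : s ∈ u.support) (hst : s ≤ t)
    (hts : t ≤ s + r) : coeffMulXAddCPow u r t ≠ 0 := by
  intro h
  have hcoeff := congrArg (coeff · (r - (t - s))) h
  simp only [coeffMulXAddCPow, finsetSum_coeff, coeff_C_mul_X_pow, coeff_zero] at hcoeff
  rw [sum_eq_single s (fun s' hs' hne => if_neg (by rw [mem_filter] at hs'; omega))
    (fun h => absurd (mem_filter.mpr ⟨hs, hst, hts⟩) h), if_pos rfl] at hcoeff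
  exact mul_ne_zero (mem_support_iff.mp hs) (hbin _ (by omega)) hcoeff

section Roots

variable [IsDomain R] [DecidableEq R] {ι : Type*} [Fintype ι] {γ : ι → R}

theorem card_eval_eq_zero_le (hγ : Function.Injective γ) (hγ0 : ∀ i, γ i ≠ 0) {p : R[X]}
    (hp : p ≠ 0) : #{i | p.eval (γ i) = 0} ≤ p.natDegree - p.natTrailingDegree := by
  set Z : Finset ι := {i | p.eval (γ i) = 0}
  have hsub : Z.map ⟨γ, hγ⟩ ⊆ (p.roots.filter fun a => ¬ 0 = a).toFinset := by
    intro a ha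
    obtain ⟨i, hi, rfl⟩ := mem_map.mp ha
    rw [mem_filter] at hi
    rw [Multiset.mem_toFinset, Multiset.mem_filter, mem_roots hp]
    exact ⟨hi.2, (hγ0 i).symm⟩
  have hsplit := congrArg Multiset.card (Multiset.filter_add_not (fun a => 0 = a) p.roots)
  rw [Multiset.card_add, ← Multiset.count_eq_card_filter_eq, count_roots,
    rootMultiplicity_eq_natTrailingDegree'] at hsplit
  have := card_roots' p
  calc #Z = #(Z.map ⟨γ, hγ⟩) := (card_map _).symm
    _ ≤ (p.roots.filter fun a => ¬ 0 = a).card :=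
      (card_le_card hsub).trans (Multiset.toFinset_card_le _)
    _ ≤ p.natDegree - p.natTrailingDegree := by omega

theorem card_coeff_mul_X_add_C_pow_eq_zero_le (hγ : Function.Injective γ)
    (hγ0 : ∀ i, γ i ≠ 0) {r : ℕ} (hbin : ∀ j ≤ r, (r.choose j : R) ≠ 0) {u : R[X]}
    {t s : ℕ} (hs : s ∈ u.support) (hst : s ≤ t) (hts : t ≤ s + r) :
    #{i | (u * (X + C (γ i)) ^ r).coeff t = 0} ≤
      min t u.natDegree - max u.natTrailingDegree (t - r) := by
  have hP := coeffMulXAddCPow_ne_zero hbin hs hst hts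
  simp_rw [coeff_mul_X_add_C_pow_eq_eval]
  have := natDegree_coeffMulXAddCPow_le u r t
  have := le_natTrailingDegree_coeffMulXAddCPow hP
  exact (card_eval_eq_zero_le hγ hγ0 hP).trans (by omega)

end Roots

theorem isCoprime_C_mul_X_add_C_pow {a b α β : R} (ha : IsUnit a) (hb : IsUnit b)
    (hαβ : IsUnit (α - β)) (r : ℕ) :
    IsCoprime (C a * (X + C α) ^ r) (C b * (X + C β) ^ r) := by
  rw [isCoprime_mul_unit_left_left (isUnit_C.mpr ha),
    isCoprime_mul_unit_left_right (isUnit_C.mpr hb)]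
  have := isCoprime_X_sub_C_of_isUnit_sub (a := -α) (b := -β)
    (by rwa [neg_sub_neg, ← neg_sub, IsUnit.neg_iff])
  simpa only [map_neg, sub_neg_eq_add] using this.pow

theorem sup_natDegree_le_sup_natDegree_smul [IsDomain R] {ι : Type*} (s : Finset ι)
    (g : ι → R[X]) {u : R[X]} (hu : u ≠ 0) :
    (s.sup fun i => (g i).natDegree) ≤ s.sup fun i => ((u • g) i).natDegree :=
  sup_mono_fun fun i _ => by
    by_cases hg : g i = 0
    · rw [hg, natDegree_zero]
      exact Nat.zero_le _
    · rw [Pi.smul_apply, smul_eq_mul, natDegree_mul hu hg]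
      exact Nat.le_add_left _ _

end Polynomial

section Unimodular

variable {R : Type*} [CommRing R] {ι : Type*}

theorem Ideal.span_range_eq_top_of_isCoprime {g : ι → R} {i j : ι}
    (h : IsCoprime (g i) (g j)) : Ideal.span (Set.range g) = ⊤ := by
  obtain ⟨a, b, hab⟩ := h
  refine Ideal.eq_top_of_isUnit_mem _ ?_ isUnit_one
  rw [← hab]
  exact add_mem (Ideal.mul_mem_left _ _ (Ideal.subset_span ⟨i, rfl⟩))
    (Ideal.mul_mem_left _ _ (Ideal.subset_span ⟨j, rfl⟩))

variable [Fintype ι] {g : ι → R}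

theorem mem_span_singleton_of_smul_mem [IsDomain R] (hg : Ideal.span (Set.range g) = ⊤)
    {p : R} (hp : p ≠ 0) {x : ι → R} (hx : p • x ∈ R ∙ g) : x ∈ R ∙ g := by
  obtain ⟨c, hc⟩ := Ideal.mem_span_range_iff_exists_fun.mp (hg ▸ Submodule.mem_top (x := 1))
  obtain ⟨s, hs⟩ := Submodule.mem_span_singleton.mp hx
  have hsi : ∀ i, s * g i = p * x i := fun i => congrFun hs i
  have hsp : s = p * ∑ i, c i * x i := by
    calc s = s * ∑ i, c i * g i := by rw [hc, mul_one]
      _ = p * ∑ i, c i * x i := by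
        simp only [mul_sum]
        exact sum_congr rfl fun i _ => by rw [mul_left_comm, hsi, mul_left_comm]
  refine Submodule.mem_span_singleton.mpr
    ⟨∑ i, c i * x i, funext fun i => mul_left_cancel₀ hp ?_⟩
  rw [Pi.smul_apply, smul_eq_mul, ← mul_assoc, ← hsp, hsi]

theorem isTorsionFree_quotient_span_singleton [IsDomain R]
    (hg : Ideal.span (Set.range g) = ⊤) : Module.IsTorsionFree R ((ι → R) ⧸ R ∙ g) :=
  Module.IsTorsionFree.of_smul_eq_zero fun p m hpm => or_iff_not_imp_left.mpr fun hp => by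
    obtain ⟨x, rfl⟩ := Submodule.Quotient.mk_surjective _ m
    rw [← Submodule.Quotient.mk_smul, Submodule.Quotient.mk_eq_zero] at hpm
    rw [Submodule.Quotient.mk_eq_zero]
    exact mem_span_singleton_of_smul_mem hg hp hpm

theorem free_quotient_span_singleton [IsDomain R] [IsPrincipalIdealRing R]
    (hg : Ideal.span (Set.range g) = ⊤) : Module.Free R ((ι → R) ⧸ R ∙ g) :=
  have := isTorsionFree_quotient_span_singleton hg
  Module.free_of_finite_type_torsion_free'

theorem mem_span_singleton_of_algebraMap_mem {K : Type*} [CommRing K] [Algebra R K]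
    [FaithfulSMul R K] (hg : Ideal.span (Set.range g) = ⊤) {x : ι → R}
    (hx : (fun i => algebraMap R K (x i)) ∈ K ∙ fun i => algebraMap R K (g i)) :
    x ∈ R ∙ g := by
  obtain ⟨c, hc⟩ := Ideal.mem_span_range_iff_exists_fun.mp (hg ▸ Submodule.mem_top (x := 1))
  obtain ⟨f, hf⟩ := Submodule.mem_span_singleton.mp hx
  have hfi : ∀ i, f * algebraMap R K (g i) = algebraMap R K (x i) := fun i => congrFun hf i
  have hf' : f = algebraMap R K (∑ i, c i * x i) := by
    calc f = f * algebraMap R K (∑ i, c i * g i) := by rw [hc, map_one, mul_one]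
      _ = algebraMap R K (∑ i, c i * x i) := by
        simp only [map_sum, map_mul, mul_sum]
        exact sum_congr rfl fun i _ => by rw [mul_left_comm, hfi]
  refine Submodule.mem_span_singleton.mpr
    ⟨∑ i, c i * x i, funext fun i => FaithfulSMul.algebraMap_injective R K ?_⟩
  rw [Pi.smul_apply, smul_eq_mul, map_mul, ← hf', hfi]

end Unimodular

theorem injective_pow_of_le_orderOf {M : Type*} [Monoid M] {c : M} {n : ℕ}
    (h : n ≤ orderOf c) : Function.Injective fun i : Fin n => c ^ (i : ℕ) := fun i j hij =>
  Fin.ext (pow_injOn_Iio_orderOf (Set.mem_Iio.mpr (by omega)) (Set.mem_Iio.mpr (by omega)) hij)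

section Generator

variable {F : Type*} [Field F] {n r : ℕ} {b γ : Fin n → F}

theorem sup_natDegree_C_mul_X_add_C_pow (hn : 0 < n) (hb : ∀ i, b i ≠ 0) :
    (univ.sup fun i => (C (b i) * (X + C (γ i)) ^ r).natDegree) = r := by
  simp only [natDegree_C_mul (hb _), natDegree_pow, natDegree_X_add_C, mul_one]
  exact sup_const (univ_nonempty_iff.mpr ⟨⟨0, hn⟩⟩) r

theorem span_range_C_mul_X_add_C_pow_eq_top (hn : 2 ≤ n) (hb : ∀ i, b i ≠ 0)
    (hγ : Function.Injective γ) :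
    Ideal.span (Set.range fun i => C (b i) * (X + C (γ i)) ^ r) = ⊤ :=
  Ideal.span_range_eq_top_of_isCoprime (i := ⟨0, by omega⟩) (j := ⟨1, by omega⟩)
    (isCoprime_C_mul_X_add_C_pow (hb _).isUnit (hb _).isUnit
      (sub_ne_zero.mpr (hγ.ne (by simp))).isUnit r)

variable [DecidableEq F]

theorem polyWeight_le (x : Fin n → F[X]) :
    polyWeight x ≤ n * ((univ.sup fun i => (x i).natDegree) + 1) := by
  rw [polyWeight, mul_comm]
  calc _ ≤ ∑ _t ∈ range ((univ.sup fun i => (x i).natDegree) + 1), n :=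
        sum_le_sum fun t _ => hammingNorm_le_card_fintype.trans_eq (Fintype.card_fin n)
    _ = _ := by rw [sum_const, card_range, smul_eq_mul]

theorem polyWeight_C_mul (hb : ∀ i, b i ≠ 0) (x : Fin n → F[X]) :
    polyWeight (fun i => C (b i) * x i) = polyWeight x := by
  simp [polyWeight, natDegree_C_mul (hb _), hammingNorm, hb]

theorem mul_succ_le_polyWeight_mul_X_add_C_pow (hrn : r < n)
    (hbin : ∀ j ≤ r, (r.choose j : F) ≠ 0) (hγ : Function.Injective γ)
    (hγ0 : ∀ i, γ i ≠ 0) {u : F[X]} (hu : u ≠ 0) :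
    n * (r + 1) ≤ polyWeight fun i => u * (X + C (γ i)) ^ r := by
  have hdeg : ∀ i, (u * (X + C (γ i)) ^ r).natDegree = u.natDegree + r := fun i => by
    rw [natDegree_mul hu (pow_ne_zero _ (X_add_C_ne_zero _)), natDegree_pow, natDegree_X_add_C,
      mul_one]
  have hsub : Icc u.natTrailingDegree (u.natDegree + r) ⊆
      range ((univ.sup fun i => (u * (X + C (γ i)) ^ r).natDegree) + 1) := fun t ht => by
    have := le_sup (f := fun i => (u * (X + C (γ i)) ^ r).natDegree) (mem_univ ⟨0, by omega⟩)
    rw [hdeg] at this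
    rw [mem_Icc] at ht
    rw [mem_range]
    omega
  refine le_trans ?_ (sum_le_sum_of_subset hsub)
  refine mul_succ_le_sum_Icc n r _ _ _ hrn.le (natTrailingDegree_le_natDegree u)
    fun t hmt htM hwindow => ?_
  obtain ⟨s, hs, hst, hts⟩ : ∃ s ∈ u.support, s ≤ t ∧ t ≤ s + r := by
    rcases hwindow with h | h
    · exact ⟨_, natTrailingDegree_mem_support_of_nonzero hu, hmt, h⟩
    · exact ⟨_, natDegree_mem_support_of_nonzero hu, h, htM⟩
  have hzero := card_coeff_mul_X_add_C_pow_eq_zero_le hγ hγ0 hbin hs hst hts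
  have hsplit := card_filter_add_card_filter_not (s := (univ : Finset (Fin n)))
    (p := fun i => (u * (X + C (γ i)) ^ r).coeff t = 0)
  rw [card_univ, Fintype.card_fin] at hsplit
  simp only [hammingNorm, ne_eq]
  omega

theorem mul_succ_le_polyWeight_smul (hrn : r < n) (hbin : ∀ j ≤ r, (r.choose j : F) ≠ 0)
    (hb : ∀ i, b i ≠ 0) (hγ : Function.Injective γ) (hγ0 : ∀ i, γ i ≠ 0) {u : F[X]}
    (hu : u ≠ 0) : n * (r + 1) ≤ polyWeight (u • fun i => C (b i) * (X + C (γ i)) ^ r) := by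
  have : (u • fun i => C (b i) * (X + C (γ i)) ^ r) =
      fun i => C (b i) * (u * (X + C (γ i)) ^ r) :=
    funext fun i => by rw [Pi.smul_apply, smul_eq_mul]; ring
  rw [this, polyWeight_C_mul hb]
  exact mul_succ_le_polyWeight_mul_X_add_C_pow hrn hbin hγ hγ0 hu

end Generator

theorem CGC_s_eq_r_MDS
    {F : Type*} [Field F] [Fintype F] [DecidableEq F]
    -- c is a primitive element of F_q
    (c : Fˣ) (hc : ∀ x : Fˣ, x ∈ Subgroup.zpowers c)
    (n r : ℕ) (hr : 1 ≤ r) (hrn : r < n) (hnq : n ≤ Fintype.card F - 1)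
    (a : Fin n → F) (ha : ∀ i, a i ≠ 0)
    (hbin : ∀ j ≤ r, (r.choose j : F) ≠ 0)
    -- G(z) = ( a_1^r (z+1)^r , a_2^r (z+c)^r , … , a_n^r (z+c^{n−1})^r )
    (Gpoly : Fin n → Polynomial F)
    (hG : ∀ i, Gpoly i =
      Polynomial.C (a i ^ r) * (Polynomial.X + Polynomial.C ((c : F) ^ (i : ℕ))) ^ r) :
    -- G(z) is a generator matrix (rank 1) of C = F_q(z)·G(z) …
    Gpoly ≠ 0 ∧
    -- … which is basic: F_q[z]^n / (F_q[z]-row span of G) is free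
    Module.Free (Polynomial F)
      ((Fin n → Polynomial F) ⧸ Submodule.span (Polynomial F) {Gpoly}) ∧
    -- … and canonical: its row degree is minimal among all polynomial generator matrices of C
    (∀ x : Fin n → Polynomial F, x ≠ 0 →
        Submodule.span (RatFunc F) {liftVec x} = Submodule.span (RatFunc F) {liftVec Gpoly} →
        (Finset.univ.sup fun i => (Gpoly i).natDegree) ≤
          Finset.univ.sup fun i => (x i).natDegree) ∧
    -- C has degree r (the max degree of the 1×1 minors of the basic matrix G)
    (Finset.univ.sup fun i => (Gpoly i).natDegree) = r ∧
    -- the free distance of C equals n(r+1), the generalized Singleton bound for (n,1,r):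
    -- hence C is an MDS convolutional code
    IsLeast { w : ℕ | ∃ x : Fin n → Polynomial F,
        liftVec x ∈ Submodule.span (RatFunc F) {liftVec Gpoly} ∧ x ≠ 0 ∧ polyWeight x = w }
      (n * (r + 1)) := by
  have hord : n ≤ orderOf c := by
    rwa [orderOf_eq_card_of_forall_mem_zpowers hc, Nat.card_units, Nat.card_eq_fintype_card]
  have hγ : Function.Injective fun i : Fin n => (c : F) ^ (i : ℕ) := fun i j hij =>
    injective_pow_of_le_orderOf hord (Units.val_injective (by simpa using hij))
  have hb : ∀ i, a i ^ r ≠ 0 := fun i => pow_ne_zero _ (ha i)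
  have hGpoly : Gpoly = fun i => C (a i ^ r) * (X + C ((c : F) ^ (i : ℕ))) ^ r := funext hG
  have hsup : (univ.sup fun i => (Gpoly i).natDegree) = r :=
    hGpoly ▸ sup_natDegree_C_mul_X_add_C_pow (by omega) hb
  have hunimod : Ideal.span (Set.range Gpoly) = ⊤ :=
    hGpoly ▸ span_range_C_mul_X_add_C_pow_eq_top (by omega) hb hγ
  have hGne : Gpoly ≠ 0 := fun h =>
    mul_ne_zero (C_ne_zero.mpr (hb ⟨0, by omega⟩)) (pow_ne_zero _ (X_add_C_ne_zero _))
      ((hG _).symm.trans (congrFun h _))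
  have hcodeword : ∀ x, liftVec x ∈ RatFunc F ∙ liftVec Gpoly → x ≠ 0 →
      ∃ u : F[X], u ≠ 0 ∧ u • Gpoly = x := fun x hx hx0 => by
    obtain ⟨u, rfl⟩ :=
      Submodule.mem_span_singleton.mp (mem_span_singleton_of_algebraMap_mem hunimod hx)
    exact ⟨u, fun hu => hx0 (by rw [hu, zero_smul]), rfl⟩
  have hweight : ∀ x, liftVec x ∈ RatFunc F ∙ liftVec Gpoly → x ≠ 0 →
      n * (r + 1) ≤ polyWeight x := fun x hx hx0 => by
    obtain ⟨u, hu, rfl⟩ := hcodeword x hx hx0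
    rw [hGpoly]
    exact mul_succ_le_polyWeight_smul hrn hbin hb hγ (fun i => pow_ne_zero _ c.ne_zero) hu
  have hGmem : liftVec Gpoly ∈ RatFunc F ∙ liftVec Gpoly := Submodule.mem_span_singleton_self _
  refine ⟨hGne, free_quotient_span_singleton hunimod, fun x hx0 hspan => ?_, hsup,
    ⟨Gpoly, hGmem, hGne, le_antisymm
      ((polyWeight_le Gpoly).trans_eq (by rw [hsup])) (hweight _ hGmem hGne)⟩,
    fun w ⟨x, hx, hx0, hw⟩ => hw ▸ hweight x hx hx0⟩
  obtain ⟨u, hu, rfl⟩ := hcodeword x (hspan ▸ Submodule.mem_span_singleton_self _) hx0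
  exact sup_natDegree_le_sup_natDegree_smul _ _ hu
end

section
/- Let F_q be a finite field and let α_1, …, α_n ∈ F_q(z) be pairwise distinct elements of the form α_i = a_i z + b_i with a_i ∈ F_q^× and b_i ∈ F_q, and let s, r be integers with 0 ≤ s ≤ r < n. Then the (r−s+1)×n matrix G over F_q(z) with entries G_{m,i} = α_i^m (for s ≤ m ≤ r, 1 ≤ i ≤ n) has rank r−s+1; consequently the convolutional Goppa code C(D,G) ⊆ F_q(z)^n defined as the F_q(z)-row span of this matrix is a convolutional code of length n and dimension r−s+1. -/
open Polynomial Finset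

theorem linearIndependent_pow_of_injective {R : Type*} [CommRing R] [IsDomain R] {n : ℕ}
    {v : Fin n → R} (hv : Function.Injective v) :
    LinearIndependent R (fun j : Fin n => fun i => v i ^ (j : ℕ)) :=
  Matrix.linearIndependent_cols_of_det_ne_zero (Matrix.det_vandermonde_ne_zero_iff.mpr hv)

theorem linearIndependent_pow_add_of_injective {R : Type*} [CommRing R] [IsDomain R]
    {n s k : ℕ} (hk : s + k ≤ n) {v : Fin n → R} (hv : Function.Injective v) :
    LinearIndependent R (fun m : Fin k => fun i => v i ^ (s + (m : ℕ))) :=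
  (linearIndependent_pow_of_injective hv).comp (fun m => Fin.castLE hk (Fin.natAdd s m))
    ((Fin.castLE_injective hk).comp (Fin.natAdd_injective k s))

theorem CGC_projective_line_rank_general
    {F : Type*} [Field F]
    (n s r : ℕ) (hsr : s ≤ r) (hrn : r < n)
    -- α_i = a_i z + b_i, pairwise distinct
    (α : Fin n → RatFunc F)
    (hdist : Function.Injective α) :
    -- the matrix (α_i^m)_{s ≤ m ≤ r, 1 ≤ i ≤ n} has rank r−s+1 …
    LinearIndependent (RatFunc F)
      (fun m : Fin (r - s + 1) => fun i : Fin n => α i ^ (s + (m : ℕ))) ∧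
    -- … so the convolutional Goppa code C(D,G), its F_q(z)-row span,
    -- is a convolutional code of length n and dimension r−s+1
    Module.finrank (RatFunc F)
      (Submodule.span (RatFunc F)
        (Set.range fun m : Fin (r - s + 1) => fun i : Fin n => α i ^ (s + (m : ℕ)))) =
      r - s + 1 := by
  have hli := linearIndependent_pow_add_of_injective (s := s) (k := r - s + 1) (by omega) hdist
  exact ⟨hli, by rw [finrank_span_eq_card hli, Fintype.card_fin]⟩

theorem CGC_projective_line_rank
    {F : Type*} [Field F] [Fintype F]
    (n s r : ℕ) (hsr : s ≤ r) (hrn : r < n)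
    (a : Fin n → F) (ha : ∀ i, a i ≠ 0) (b : Fin n → F)
    -- α_i = a_i z + b_i, pairwise distinct
    (α : Fin n → RatFunc F)
    (hα : ∀ i, α i = RatFunc.C (a i) * RatFunc.X + RatFunc.C (b i))
    (hdist : Function.Injective α) :
    -- the matrix (α_i^m)_{s ≤ m ≤ r, 1 ≤ i ≤ n} has rank r−s+1 …
    LinearIndependent (RatFunc F)
      (fun m : Fin (r - s + 1) => fun i : Fin n => α i ^ (s + (m : ℕ))) ∧
    -- … so the convolutional Goppa code C(D,G), its F_q(z)-row span,
    -- is a convolutional code of length n and dimension r−s+1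
    Module.finrank (RatFunc F)
      (Submodule.span (RatFunc F)
        (Set.range fun m : Fin (r - s + 1) => fun i : Fin n => α i ^ (s + (m : ℕ)))) =
      r - s + 1 :=
  CGC_projective_line_rank_general n s r hsr hrn α hdist
end

section
/- Let F_q be a finite field and let α_1, …, α_n ∈ F_q(z) be pairwise distinct elements of the form α_i = a_i z + b_i with a_i ∈ F_q^× and b_i ∈ F_q, and let s, r be integers with 0 ≤ s ≤ r < n. For 1 ≤ j ≤ n set h_j = 1 / ( α_j^s · Π_{i≠j} (α_j − α_i) ) ∈ F_q(z). Let G be the (r−s+1)×n matrix with entries α_i^m (s ≤ m ≤ r) and let H be the (n−r+s−1)×n matrix with entries h_i α_i^l (0 ≤ l ≤ n−r+s−2). Then G·Hᵀ = 0, i.e., Σ_{j=1}^{n} α_j^{m} h_j α_j^{l} = 0 for all s ≤ m ≤ r and 0 ≤ l ≤ n−r+s−2; moreover H has rank n−(r−s+1) and the F_q(z)-row span of H equals the dual code C(D,G)^⊥ = { y ∈ F_q(z)^n : Σ_{i=1}^n x_i y_i = 0 for all x in the row span of G }. In other words, H is a control (parity-check) matrix of the convolutional Goppa code C(D,G). 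-/
/-!
Each sum `∑ⱼ αⱼ^m hⱼ αⱼ^l` equals `∑ⱼ αⱼ^(m-s+l) / ∏_{i≠j} (αⱼ - αᵢ)`, the coefficient of
`X^(n-1)` in the Lagrange interpolant of `X^(m-s+l)`; as `m - s + l < n - 1` it vanishes. The rows
of `G` and of `H` are rescaled columns of the invertible Vandermonde matrix of the `αᵢ`, hence
independent, so the dual of the row span of `G` has dimension `n - (r - s + 1)`, and the
independent rows of `H`, lying in it, span it.
-/

open Polynomial Finset Matrix

theorem Lagrange.sum_pow_div_prod_sub_eq_zero {K ι : Type*} [Field K] [DecidableEq ι]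
    {s : Finset ι} {v : ι → K} (hvs : Set.InjOn v s) {k : ℕ} (hk : k + 1 < #s) :
    ∑ i ∈ s, v i ^ k / ∏ j ∈ s.erase i, (v i - v j) = 0 := by
  have hdeg : (X ^ k : K[X]).degree < #s := by
    rw [degree_X_pow]; exact_mod_cast (by omega)
  simpa [coeff_X_pow, show #s - 1 ≠ k by omega] using (Lagrange.coeff_eq_sum hvs hdeg).symm

theorem RatFunc.C_mul_X_add_C_ne_zero {K : Type*} [Field K] {a : K} (ha : a ≠ 0) (b : K) :
    RatFunc.C a * RatFunc.X + RatFunc.C b ≠ 0 := by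
  rw [← RatFunc.algebraMap_C, ← RatFunc.algebraMap_X, ← RatFunc.algebraMap_C, ← map_mul,
    ← map_add]
  refine (map_ne_zero_iff _ (RatFunc.algebraMap_injective K)).mpr fun h0 => ha ?_
  simpa using congrArg (coeff · 1) h0

theorem linearIndependent_mul_pow {K : Type*} [Field K] {n k : ℕ} (hk : k ≤ n)
    {x : Fin n → K} (hx : Function.Injective x) {w : Fin n → K} (hw : ∀ i, w i ≠ 0) :
    LinearIndependent K (fun l : Fin k => fun i => w i * x i ^ (l : ℕ)) := by
  have hunit : IsUnit (diagonal w * vandermonde x) := by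
    rw [isUnit_iff_isUnit_det, det_mul, det_diagonal, isUnit_iff_ne_zero]
    exact mul_ne_zero (prod_ne_zero_iff.mpr fun i _ => hw i) (det_vandermonde_ne_zero_iff.mpr hx)
  convert (linearIndependent_cols_iff_isUnit.mpr hunit).comp _ (Fin.castLE_injective hk)
  rw [Function.comp_apply, col_apply, diagonal_mul, vandermonde_apply, Fin.val_castLE]

theorem span_eq_setOf_dotProduct_eq_zero {K ι κ μ : Type*} [Field K] [Fintype ι]
    [Fintype κ] [Fintype μ] {g : κ → ι → K} {v : μ → ι → K}
    (hg : LinearIndependent K g) (hv : LinearIndependent K v)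
    (horth : ∀ a b, g a ⬝ᵥ v b = 0) (hcard : Fintype.card κ + Fintype.card μ = Fintype.card ι) :
    (Submodule.span K (Set.range v) : Set (ι → K)) =
      {y | ∀ x ∈ Submodule.span K (Set.range g), x ⬝ᵥ y = 0} := by
  let A : Matrix κ ι K := of g
  have hA : ∀ y a, (A *ᵥ y) a = g a ⬝ᵥ y := fun _ _ => rfl
  have hker : {y | ∀ x ∈ Submodule.span K (Set.range g), x ⬝ᵥ y = 0} = A.mulVecLin.ker := by
    ext y
    change Submodule.span K (Set.range g) ≤ LinearMap.ker ((dotProductBilin K K).flip y) ↔ _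
    simp [Submodule.span_le, Set.range_subset_iff, funext_iff, hA]
  have hfinrank : Module.finrank K A.mulVecLin.ker = Fintype.card μ := by
    have := A.mulVecLin.finrank_range_add_finrank_ker
    have hrank : A.rank = Fintype.card κ := hg.rank_matrix
    rw [Module.finrank_fintype_fun_eq_card, ← hcard] at this
    rw [Matrix.rank] at hrank
    omega
  have hle : Submodule.span K (Set.range v) ≤ A.mulVecLin.ker := by
    simp [Submodule.span_le, Set.range_subset_iff, funext_iff, hA, horth]
  rw [hker, Submodule.eq_of_le_of_finrank_le hle (by rw [hfinrank, finrank_span_eq_card hv])]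

theorem CGC_projective_line_parity_check_general
    {F : Type*} [Field F]
    (n s r : ℕ) (hsr : s ≤ r) (hrn : r < n)
    (a : Fin n → F) (ha : ∀ i, a i ≠ 0) (b : Fin n → F)
    -- α_i = a_i z + b_i, pairwise distinct
    (α : Fin n → RatFunc F)
    (hα : ∀ i, α i = RatFunc.C (a i) * RatFunc.X + RatFunc.C (b i))
    (hdist : Function.Injective α)
    -- h_j = 1 / ( α_j^s · Π_{i≠j} (α_j − α_i) )
    (h : Fin n → RatFunc F)
    (hh : ∀ j, h j = (α j ^ s * ∏ i ∈ Finset.univ.erase j, (α j - α i))⁻¹) :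
    -- G·Hᵀ = 0 : Σ_j α_j^m · h_j α_j^l = 0 for s ≤ m ≤ r and 0 ≤ l ≤ n−r+s−2
    (∀ m, s ≤ m → m ≤ r → ∀ l : ℕ, l + r + 2 ≤ n + s →
      ∑ j, α j ^ m * (h j * α j ^ l) = 0) ∧
    -- H has rank n−(r−s+1)
    LinearIndependent (RatFunc F)
      (fun l : Fin (n - (r - s + 1)) => fun i : Fin n => h i * α i ^ (l : ℕ)) ∧
    -- the F_q(z)-row span of H is the dual code C(D,G)^⊥:
    -- H is a control (parity-check) matrix of the convolutional Goppa code C(D,G)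
    (Submodule.span (RatFunc F)
        (Set.range fun l : Fin (n - (r - s + 1)) => fun i : Fin n => h i * α i ^ (l : ℕ)) :
      Set (Fin n → RatFunc F)) =
      { y : Fin n → RatFunc F |
        ∀ x ∈ Submodule.span (RatFunc F)
          (Set.range fun m : Fin (r - s + 1) => fun i : Fin n => α i ^ (s + (m : ℕ))),
        ∑ i, x i * y i = 0 } := by
  have hα0 : ∀ i, α i ≠ 0 := fun i => hα i ▸ RatFunc.C_mul_X_add_C_ne_zero (ha i) (b i)
  have hprod : ∀ j, ∏ i ∈ univ.erase j, (α j - α i) ≠ 0 := fun j =>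
    prod_ne_zero_iff.mpr fun i hi => sub_ne_zero.mpr (hdist.ne (ne_of_mem_erase hi).symm)
  have hh0 : ∀ j, h j ≠ 0 := fun j => by
    rw [hh j]; exact inv_ne_zero (mul_ne_zero (pow_ne_zero _ (hα0 j)) (hprod j))
  have orth : ∀ m, s ≤ m → m ≤ r → ∀ l : ℕ, l + r + 2 ≤ n + s →
      ∑ j, α j ^ m * (h j * α j ^ l) = 0 := by
    intro m hsm hmr l hl
    obtain ⟨d, rfl⟩ := Nat.exists_eq_add_of_le hsm
    calc ∑ j, α j ^ (s + d) * (h j * α j ^ l)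
        = ∑ j, α j ^ (d + l) / ∏ i ∈ univ.erase j, (α j - α i) := by
          refine sum_congr rfl fun j _ => ?_
          have hαs := pow_ne_zero s (hα0 j)
          rw [hh j]
          field_simp
          ring
      _ = 0 := Lagrange.sum_pow_div_prod_sub_eq_zero hdist.injOn
        (by simp only [card_univ, Fintype.card_fin]; omega)
  have indep := linearIndependent_mul_pow (k := n - (r - s + 1)) (by omega) hdist hh0
  refine ⟨orth, indep, span_eq_setOf_dotProduct_eq_zero ?_ indep ?_
    (by simp only [Fintype.card_fin]; omega)⟩
  · simpa only [pow_add] using linearIndependent_mul_pow (k := r - s + 1) (by omega) hdist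
      (w := fun i => α i ^ s) fun i => pow_ne_zero _ (hα0 i)
  · exact fun m l => orth _ le_self_add (by omega) _ (by omega)

theorem CGC_projective_line_parity_check
    {F : Type*} [Field F] [Fintype F]
    (n s r : ℕ) (hsr : s ≤ r) (hrn : r < n)
    (a : Fin n → F) (ha : ∀ i, a i ≠ 0) (b : Fin n → F)
    -- α_i = a_i z + b_i, pairwise distinct
    (α : Fin n → RatFunc F)
    (hα : ∀ i, α i = RatFunc.C (a i) * RatFunc.X + RatFunc.C (b i))
    (hdist : Function.Injective α)
    -- h_j = 1 / ( α_j^s · Π_{i≠j} (α_j − α_i) )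
    (h : Fin n → RatFunc F)
    (hh : ∀ j, h j = (α j ^ s * ∏ i ∈ Finset.univ.erase j, (α j - α i))⁻¹) :
    -- G·Hᵀ = 0 : Σ_j α_j^m · h_j α_j^l = 0 for s ≤ m ≤ r and 0 ≤ l ≤ n−r+s−2
    (∀ m, s ≤ m → m ≤ r → ∀ l : ℕ, l + r + 2 ≤ n + s →
      ∑ j, α j ^ m * (h j * α j ^ l) = 0) ∧
    -- H has rank n−(r−s+1)
    LinearIndependent (RatFunc F)
      (fun l : Fin (n - (r - s + 1)) => fun i : Fin n => h i * α i ^ (l : ℕ)) ∧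
    -- the F_q(z)-row span of H is the dual code C(D,G)^⊥:
    -- H is a control (parity-check) matrix of the convolutional Goppa code C(D,G)
    (Submodule.span (RatFunc F)
        (Set.range fun l : Fin (n - (r - s + 1)) => fun i : Fin n => h i * α i ^ (l : ℕ)) :
      Set (Fin n → RatFunc F)) =
      { y : Fin n → RatFunc F |
        ∀ x ∈ Submodule.span (RatFunc F)
          (Set.range fun m : Fin (r - s + 1) => fun i : Fin n => α i ^ (s + (m : ℕ))),
        ∑ i, x i * y i = 0 } :=
  CGC_projective_line_parity_check_general n s r hsr hrn a ha b α hα hdist h hh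
end

section
/- Let F_q be a finite field and let C ⊆ F_q(z)^n be a convolutional code of dimension k. (1) If G is a basic generator matrix of C and B ∈ GL(k, F_q[z]) is a unimodular matrix, then B·G is again a basic generator matrix of C. (2) If G and G' are any two basic generator matrices of C, then δ_G = δ_{G'}, where δ_G denotes the maximum of the degrees of the k×k minors of G. Hence the number δ_G is an invariant of the code C (its degree). -/
/-!
A basic generator matrix is determined by its code up to a unimodular change of rows: since
`F[z]ⁿ / M` is free, hence torsion-free, the row module `M` is saturated, so it equals the set of
polynomial vectors lying in `C`. Two basic generator matrices therefore have the same row module,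
hence differ by a matrix `B` that is invertible over `F[z]`, i.e. `det B` is a nonzero constant,
and multiplying by `B` scales every full minor by that constant. Conversely, multiplying a basic
generator matrix by a unimodular matrix preserves its row module, hence its code and quotient.
-/

open Polynomial Finset

/-- `δ_G`: the maximum of the degrees of the k×k minors of a k×n polynomial matrix G. -/
noncomputable def maxMinorDeg {F : Type*} [Field F] {k n : ℕ}
    (G : Fin k → Fin n → Polynomial F) : ℕ :=
  Finset.univ.sup fun g : Fin k → Fin n => (((Matrix.of G).submatrix id g).det).natDegree

open Matrix nonZeroDivisors

namespace Submodule

variable {R M N : Type*} [CommRing R] [AddCommGroup M] [Module R M] [AddCommGroup N] [Module R N]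
  (K : Type*) [CommRing K] [Algebra R K] [Module K N] [IsScalarTower R K N] [IsLocalization R⁰ K]
  (f : M →ₗ[R] N) [IsLocalizedModule R⁰ f]

theorem comap_localized'_eq_self (P : Submodule R M) [Module.IsTorsionFree R (M ⧸ P)] :
    ((P.localized' K R⁰ f).restrictScalars R).comap f = P := by
  refine le_antisymm (fun x ⟨m, hm, s, hmx⟩ => ?_) ((localized'gi K R⁰ f).gc.le_u_l P)
  rw [IsLocalizedModule.mk'_eq_iff, Submonoid.smul_def, ← map_smul] at hmx
  obtain ⟨c, hc⟩ := IsLocalizedModule.exists_of_eq (S := R⁰) hmx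
  have hreg : IsRegular ((c * s : R⁰) : R) := isRegular_iff_mem_nonZeroDivisors.mpr (c * s).2
  have hcs : ((c * s : R⁰) : R) • P.mkQ x = 0 := by
    rw [← map_smul, mkQ_apply, Quotient.mk_eq_zero, Submonoid.coe_mul, mul_smul,
      ← Submonoid.smul_def, ← hc]
    exact P.smul_mem _ hm
  rw [← P.ker_mkQ]
  exact Module.IsTorsionFree.isSMulRegular hreg (hcs.trans (smul_zero _).symm)

end Submodule

namespace Matrix

variable {R : Type*} [CommRing R] {k l n : Type*} [Fintype k]

theorem span_range_row_mul_le [Fintype l] (B : Matrix l k R) (G : Matrix k n R) :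
    Submodule.span R (Set.range (B * G).row) ≤ Submodule.span R (Set.range G.row) := by
  rw [← range_vecMulLinear, ← range_vecMulLinear]
  rintro _ ⟨v, rfl⟩
  exact ⟨v ᵥ* B, vecMul_vecMul v B G⟩

theorem exists_mul_eq_of_span_range_row_le {G G' : Matrix k n R}
    (h : Submodule.span R (Set.range G'.row) ≤ Submodule.span R (Set.range G.row)) :
    ∃ B : Matrix k k R, B * G = G' := by
  rw [← range_vecMulLinear G] at h
  choose B hB using fun i => h (Submodule.subset_span (Set.mem_range_self (f := G'.row) i))
  exact ⟨of B, funext hB⟩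

theorem mul_right_cancel_of_linearIndependent_row {G : Matrix k n R}
    (hG : LinearIndependent R G.row) {A A' : Matrix l k R} (h : A * G = A' * G) : A = A' :=
  funext fun i => vecMul_injective_iff.mpr hG (congrFun h i)

variable [DecidableEq k]

theorem span_range_row_mul_of_isUnit_det {B : Matrix k k R} (hB : IsUnit B.det)
    (G : Matrix k n R) :
    Submodule.span R (Set.range (B * G).row) = Submodule.span R (Set.range G.row) := by
  refine le_antisymm (span_range_row_mul_le B G) ?_
  simpa only [nonsing_inv_mul_cancel_left _ _ hB] using span_range_row_mul_le B⁻¹ (B * G)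

theorem linearIndependent_row_mul_of_isUnit_det {B : Matrix k k R} (hB : IsUnit B.det)
    {G : Matrix k n R} (hG : LinearIndependent R G.row) : LinearIndependent R (B * G).row := by
  rw [← vecMul_injective_iff] at hG ⊢
  intro v w hvw
  simp only [← vecMul_vecMul] at hvw
  exact vecMul_injective_of_isUnit ((isUnit_iff_isUnit_det B).mpr hB) (hG hvw)

theorem exists_isUnit_det_mul_eq_of_span_range_row_eq {G G' : Matrix k n R}
    (hG' : LinearIndependent R G'.row)
    (h : Submodule.span R (Set.range G.row) = Submodule.span R (Set.range G'.row)) :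
    ∃ B : Matrix k k R, IsUnit B.det ∧ B * G = G' := by
  obtain ⟨B, hB⟩ := exists_mul_eq_of_span_range_row_le h.ge
  obtain ⟨B', hB'⟩ := exists_mul_eq_of_span_range_row_le h.le
  have hBB' : B * B' = 1 := mul_right_cancel_of_linearIndependent_row hG' <| by
    rw [Matrix.mul_assoc, hB', hB, Matrix.one_mul]
  exact ⟨B, IsUnit.of_mul_eq_one B'.det (by rw [← det_mul, hBB', det_one]), hB⟩

end Matrix

section ConvolutionalCode

variable {F : Type*} [Field F] {k n : ℕ}

-- An `abbrev`, so that the instance `IsLocalizedModule.pi` applies to it.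
noncomputable abbrev liftVecLinearMap (F : Type*) [Field F] (n : ℕ) :
    (Fin n → F[X]) →ₗ[F[X]] (Fin n → RatFunc F) :=
  .pi fun i => Algebra.linearMap F[X] (RatFunc F) ∘ₗ .proj i

theorem span_range_liftVec (G : Fin k → Fin n → F[X]) :
    Submodule.span (RatFunc F) (Set.range fun i => liftVec (G i)) =
      (Submodule.span F[X] (Set.range G)).localized' (RatFunc F) F[X]⁰
        (liftVecLinearMap F n) := by
  rw [Submodule.localized'_span, ← Set.range_comp]
  rfl

theorem maxMinorDeg_mul_of_isUnit_det {B : Matrix (Fin k) (Fin k) F[X]} (hB : IsUnit B.det)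
    (G : Fin k → Fin n → F[X]) : maxMinorDeg (B * of G) = maxMinorDeg G := by
  obtain ⟨a, ha, hdet⟩ := Polynomial.isUnit_iff.mp hB
  refine Finset.sup_congr rfl fun g _ => ?_
  have hminor : (of (B * of G)).submatrix id g = B * (of G).submatrix id g := rfl
  rw [hminor, det_mul, ← hdet, natDegree_C_mul ha.ne_zero]

theorem span_range_eq_comap_of_free_quotient {C : Submodule (RatFunc F) (Fin n → RatFunc F)}
    {G : Fin k → Fin n → F[X]}
    (hspan : Submodule.span (RatFunc F) (Set.range fun i => liftVec (G i)) = C)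
    (hfree : Module.Free F[X] ((Fin n → F[X]) ⧸ Submodule.span F[X] (Set.range G))) :
    Submodule.span F[X] (Set.range G) =
      (C.restrictScalars F[X]).comap (liftVecLinearMap F n) := by
  rw [← hspan, span_range_liftVec, Submodule.comap_localized'_eq_self]

end ConvolutionalCode

theorem basic_matrices_unimodular_invariance_and_degree_general
    {F : Type*} [Field F]
    (n k : ℕ)
    (C : Submodule (RatFunc F) (Fin n → RatFunc F)) :
    -- (1) the family of basic generator matrices of C is invariant under GL(k, F_q[z])
    (∀ G : Fin k → Fin n → Polynomial F,
      LinearIndependent (Polynomial F) G →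
      Submodule.span (RatFunc F) (Set.range fun i => liftVec (G i)) = C →
      Module.Free (Polynomial F)
        ((Fin n → Polynomial F) ⧸ Submodule.span (Polynomial F) (Set.range G)) →
      ∀ B : Matrix (Fin k) (Fin k) (Polynomial F), IsUnit B.det →
        LinearIndependent (Polynomial F) (fun i => (B * Matrix.of G) i) ∧
        Submodule.span (RatFunc F) (Set.range fun i => liftVec ((B * Matrix.of G) i)) = C ∧
        Module.Free (Polynomial F)
          ((Fin n → Polynomial F) ⧸
            Submodule.span (Polynomial F) (Set.range fun i => (B * Matrix.of G) i))) ∧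
    -- (2) δ_G is the same for all basic generator matrices of C
    (∀ G G' : Fin k → Fin n → Polynomial F,
      LinearIndependent (Polynomial F) G →
      Submodule.span (RatFunc F) (Set.range fun i => liftVec (G i)) = C →
      Module.Free (Polynomial F)
        ((Fin n → Polynomial F) ⧸ Submodule.span (Polynomial F) (Set.range G)) →
      LinearIndependent (Polynomial F) G' →
      Submodule.span (RatFunc F) (Set.range fun i => liftVec (G' i)) = C →
      Module.Free (Polynomial F)
        ((Fin n → Polynomial F) ⧸ Submodule.span (Polynomial F) (Set.range G')) →
      maxMinorDeg G = maxMinorDeg G') := by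
  refine ⟨fun G hG hspan hfree B hB => ?_, fun G G' _ hspan hfree hG' hspan' hfree' => ?_⟩
  · have hrows := span_range_row_mul_of_isUnit_det hB (of G)
    refine ⟨linearIndependent_row_mul_of_isUnit_det hB hG, ?_, ?_⟩
    · exact (span_range_liftVec (B * of G)).trans <|
        (congrArg _ hrows).trans <| (span_range_liftVec G).symm.trans hspan
    · exact hrows ▸ hfree
  · obtain ⟨B, hB, hBG⟩ := exists_isUnit_det_mul_eq_of_span_range_row_eq (G := of G) hG'
      ((span_range_eq_comap_of_free_quotient hspan hfree).trans
        (span_range_eq_comap_of_free_quotient hspan' hfree').symm)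
    rw [← maxMinorDeg_mul_of_isUnit_det hB G]
    exact congrArg maxMinorDeg hBG

theorem basic_matrices_unimodular_invariance_and_degree
    {F : Type*} [Field F] [Fintype F]
    (n k : ℕ)
    (C : Submodule (RatFunc F) (Fin n → RatFunc F))
    (hC : Module.finrank (RatFunc F) C = k) :
    -- (1) the family of basic generator matrices of C is invariant under GL(k, F_q[z])
    (∀ G : Fin k → Fin n → Polynomial F,
      LinearIndependent (Polynomial F) G →
      Submodule.span (RatFunc F) (Set.range fun i => liftVec (G i)) = C →
      Module.Free (Polynomial F)
        ((Fin n → Polynomial F) ⧸ Submodule.span (Polynomial F) (Set.range G)) →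
      ∀ B : Matrix (Fin k) (Fin k) (Polynomial F), IsUnit B.det →
        LinearIndependent (Polynomial F) (fun i => (B * Matrix.of G) i) ∧
        Submodule.span (RatFunc F) (Set.range fun i => liftVec ((B * Matrix.of G) i)) = C ∧
        Module.Free (Polynomial F)
          ((Fin n → Polynomial F) ⧸
            Submodule.span (Polynomial F) (Set.range fun i => (B * Matrix.of G) i))) ∧
    -- (2) δ_G is the same for all basic generator matrices of C
    (∀ G G' : Fin k → Fin n → Polynomial F,
      LinearIndependent (Polynomial F) G →
      Submodule.span (RatFunc F) (Set.range fun i => liftVec (G i)) = C →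
      Module.Free (Polynomial F)
        ((Fin n → Polynomial F) ⧸ Submodule.span (Polynomial F) (Set.range G)) →
      LinearIndependent (Polynomial F) G' →
      Submodule.span (RatFunc F) (Set.range fun i => liftVec (G' i)) = C →
      Module.Free (Polynomial F)
        ((Fin n → Polynomial F) ⧸ Submodule.span (Polynomial F) (Set.range G')) →
      maxMinorDeg G = maxMinorDeg G') :=
  basic_matrices_unimodular_invariance_and_degree_general n k C
end

section
/- Let F_q be a finite field and let C ⊆ F_q(z)^n be a convolutional code of dimension k and degree δ, with k < n. Then the dual code C^⊥ = { y ∈ F_q(z)^n : Σ_{i=1}^n x_i y_i = 0 for all x ∈ C } is a convolutional code of length n and dimension n−k, and the degree of C^⊥ equals δ; that is, for any basic generator matrix H of C^⊥, the maximum of the degrees of the (n−k)×(n−k) minors of H equals δ. -/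
open Polynomial Finset

/-- The dual code of `C ⊆ K^n` with respect to the pairing `⟨x,y⟩ = Σ_i x_i y_i`. -/
def dualCode {K : Type*} [Field K] {n : ℕ} (C : Submodule K (Fin n → K)) :
    Submodule K (Fin n → K) where
  carrier := { y | ∀ x ∈ C, ∑ i, x i * y i = 0 }
  zero_mem' := by intro x _; simp
  add_mem' := by
    intro y y' hy hy' x hx
    simp only [Pi.add_apply, mul_add, Finset.sum_add_distrib, hy x hx, hy' x hx, add_zero]
  smul_mem' := by
    intro c y hy x hx
    have h : ∑ i, x i * (c • y) i = c * ∑ i, x i * y i := by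
      rw [Finset.mul_sum]
      exact Finset.sum_congr rfl fun i _ => by
        simp [Pi.smul_apply, smul_eq_mul, mul_left_comm]
    simp only [Set.mem_setOf_eq] at *
    rw [h, hy x hx, mul_zero]

/-!
Because `F[z]^n ⧸ span G₀` is free, the rows of `G₀` extend to a basis of `F[z]^n`: there are
square matrices `P`, `Q` with `P Qᵀ = Qᵀ P = 1` such that the first `k` rows of `P` are `G₀`.
The last `n - k` rows `W` of `Q` span `C^⊥` over `F(z)`, and their `F[z]`-span consists of all
polynomial vectors of `C^⊥`. A basic generator matrix `H` of `C^⊥` spans that same module,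
because a free quotient is torsion free, so `H = T W` with `T` unimodular and `H`, `W` have the
same maximal minor degrees. Finally, by Jacobi's complementary minor identity every `k × k` minor
of `G₀` is `det P`, a unit, times the complementary `(n - k) × (n - k)` minor of `W`, and
conversely.
-/

open Matrix Submodule Sum

theorem exists_basis_inl_eq {R : Type*} [CommRing R] [Nontrivial R] {k n : ℕ}
    (G : Fin k → Fin n → R) (hG : LinearIndependent R G)
    (hfree : Module.Free R ((Fin n → R) ⧸ span R (Set.range G))) :
    ∃ B : Module.Basis (Fin k ⊕ Fin (n - k)) R (Fin n → R), ∀ a, B (inl a) = G a := by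
  set S := span R (Set.range G)
  obtain ⟨l, hl⟩ := S.mkQ.exists_rightInverse_of_surjective S.range_mkQ
  obtain ⟨e, he, -⟩ :=
    (LinearMap.exact_subtype_mkQ S).splitSurjectiveEquiv S.injective_subtype ⟨l, hl⟩
  let bQ := Module.Free.chooseBasis R ((Fin n → R) ⧸ S)
  let B := ((Module.Basis.span hG).prod bQ).map e.symm
  have hcard : k + Fintype.card (Module.Free.ChooseBasisIndex R ((Fin n → R) ⧸ S)) = n := by
    simpa using (Module.finrank_eq_card_basis B).symm
  refine ⟨B.reindex (Equiv.sumCongr (Equiv.refl _) (Fintype.equivFinOfCardEq (by omega))),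
    fun a => ?_⟩
  have hsplit : e.symm (Module.Basis.span hG a, 0) = G a := by
    simpa [Module.Basis.span_apply] using (LinearMap.congr_fun he (Module.Basis.span hG a)).symm
  simpa [B, Module.Basis.prod_apply] using hsplit

theorem Module.Basis.exists_mul_transpose_eq_one {R : Type*} [CommRing R] {ι ν : Type*}
    [Fintype ι] [DecidableEq ι] [Fintype ν] [DecidableEq ν] (B : Module.Basis ι R (ν → R)) :
    ∃ Q : Matrix ι ν R, Matrix.of B * Qᵀ = 1 ∧ Qᵀ * Matrix.of B = 1 := by
  have hcols : (Pi.basisFun R ν).toMatrix B = (Matrix.of B)ᵀ := by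
    ext j i
    simp [Module.Basis.toMatrix_apply]
  refine ⟨B.toMatrix (Pi.basisFun R ν), ?_, ?_⟩ <;>
    rw [← transpose_transpose (Matrix.of B), ← transpose_mul, ← hcols,
      Module.Basis.toMatrix_mul_toMatrix_flip, transpose_one]

theorem exists_mul_transpose_eq_one_of_free_quotient {R : Type*} [CommRing R] [Nontrivial R]
    {k n : ℕ} (G : Fin k → Fin n → R) (hG : LinearIndependent R G)
    (hfree : Module.Free R ((Fin n → R) ⧸ span R (Set.range G))) :
    ∃ P Q : Matrix (Fin k ⊕ Fin (n - k)) (Fin n) R,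
      (fun a => P (inl a)) = G ∧ P * Qᵀ = 1 ∧ Qᵀ * P = 1 := by
  obtain ⟨B, hB⟩ := exists_basis_inl_eq G hG hfree
  obtain ⟨Q, hPQ, hQP⟩ := B.exists_mul_transpose_eq_one
  exact ⟨Matrix.of B, Q, funext hB, hPQ, hQP⟩

section ComplementaryRows

variable {A : Type*} [CommRing A] {α β ν : Type*} [Fintype α] [Fintype β] [Fintype ν]
  [DecidableEq α] [DecidableEq β] {P Q : Matrix (α ⊕ β) ν A}

theorem linearIndependent_rows_inr_of_mul_transpose_eq_one (hPQ : P * Qᵀ = 1) :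
    LinearIndependent A fun b => Q (inr b) := by
  have hQP : Q * Pᵀ = 1 := by
    rw [← transpose_transpose Q, ← transpose_mul, hPQ, transpose_one]
  have hrows : LinearIndependent A Q.row := by
    refine Matrix.vecMul_injective_iff.1 (Function.LeftInverse.injective (g := (· ᵥ* Pᵀ)) ?_)
    intro c
    simp only [vecMul_vecMul, hQP, vecMul_one]
  exact hrows.comp inr inr_injective

theorem mem_span_rows_inr_iff [DecidableEq ν] (hPQ : P * Qᵀ = 1)
    (hQP : Qᵀ * P = 1) {y : ν → A} :
    y ∈ span A (Set.range fun b => Q (inr b)) ↔ ∀ a, P (inl a) ⬝ᵥ y = 0 := by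
  constructor
  · intro hy a
    obtain ⟨c, rfl⟩ := (mem_span_range_iff_exists_fun A).1 hy
    have horth : ∀ b, P (inl a) ⬝ᵥ Q (inr b) = 0 := fun b => by
      simpa [mul_apply', one_apply] using congrFun (congrFun hPQ (inl a)) (inr b)
    simp [dotProduct_sum, dotProduct_smul, horth]
  · intro hy
    have hexpand : y = (P *ᵥ y) ᵥ* Q := by
      rw [← mulVec_transpose, mulVec_mulVec, hQP, one_mulVec]
    have hzero : ∀ a, (P *ᵥ y) (inl a) = 0 := hy
    rw [hexpand, vecMul_eq_sum, Fintype.sum_sum_type]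
    simp only [hzero, zero_smul, Finset.sum_const_zero, zero_add]
    exact sum_mem fun b _ => smul_mem _ _ (subset_span ⟨b, rfl⟩)

end ComplementaryRows

theorem Matrix.map_mul_eq_one {R S : Type*} [CommRing R] [CommRing S] (f : R →+* S)
    {m ν : Type*} [Fintype ν] [DecidableEq m] {M : Matrix m ν R} {N : Matrix ν m R}
    (h : M * N = 1) : M.map f * N.map f = 1 := by
  rw [← Matrix.map_mul, h, Matrix.map_one _ f.map_zero f.map_one]

theorem algebraMap_mem_span_rows_inr_iff {R K : Type*} [CommRing R] [CommRing K] [Algebra R K]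
    [FaithfulSMul R K] {α β ν : Type*} [Fintype α] [Fintype β] [Fintype ν] [DecidableEq α]
    [DecidableEq β] [DecidableEq ν] {P Q : Matrix (α ⊕ β) ν R} (hPQ : P * Qᵀ = 1)
    (hQP : Qᵀ * P = 1) {v : ν → R} :
    (fun j => algebraMap R K (v j)) ∈
        span K (Set.range fun b j => algebraMap R K (Q (inr b) j)) ↔
      v ∈ span R (Set.range fun b => Q (inr b)) := by
  rw [mem_span_rows_inr_iff hPQ hQP]
  refine (mem_span_rows_inr_iff (map_mul_eq_one _ hPQ) (map_mul_eq_one _ hQP)).trans ?_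
  refine forall_congr' fun a => ?_
  rw [← map_eq_zero_iff _ (FaithfulSMul.algebraMap_injective R K), RingHom.map_dotProduct]
  rfl

theorem mem_dualCode_span_iff {K : Type*} [Field K] {n : ℕ} {ι : Type*} (v : ι → Fin n → K)
    {y : Fin n → K} : y ∈ dualCode (span K (Set.range v)) ↔ ∀ i, v i ⬝ᵥ y = 0 := by
  refine ⟨fun hy i => hy _ (subset_span ⟨i, rfl⟩), fun hy x hx => ?_⟩
  change x ⬝ᵥ y = 0
  induction hx using span_induction with
  | mem x hx => obtain ⟨i, rfl⟩ := hx; exact hy i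
  | zero => exact zero_dotProduct y
  | add x x' _ _ hx hx' => rw [add_dotProduct, hx, hx', add_zero]
  | smul c x _ hx => rw [smul_dotProduct, hx, smul_zero]

theorem dualCode_span_rows_inl {K : Type*} [Field K] {α β : Type*} [Fintype α] [Fintype β]
    [DecidableEq α] [DecidableEq β] {n : ℕ} {P Q : Matrix (α ⊕ β) (Fin n) K}
    (hPQ : P * Qᵀ = 1) (hQP : Qᵀ * P = 1) :
    dualCode (span K (Set.range fun a => P (inl a))) = span K (Set.range fun b => Q (inr b)) := by
  ext y
  rw [mem_dualCode_span_iff, mem_span_rows_inr_iff hPQ hQP]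

theorem algebraMap_mem_span_iff_of_isTorsionFree {R K : Type*} [CommRing R] [CommRing K]
    [Algebra R K] [IsFractionRing R K] {ι ν : Type*} [Fintype ι] (H : ι → ν → R)
    [Module.IsTorsionFree R ((ν → R) ⧸ span R (Set.range H))] {v : ν → R} :
    (fun j => algebraMap R K (v j)) ∈ span K (Set.range fun l j => algebraMap R K (H l j)) ↔
      v ∈ span R (Set.range H) := by
  constructor
  · intro hv
    obtain ⟨c, hc⟩ := (mem_span_range_iff_exists_fun K).1 hv
    obtain ⟨d, hd⟩ := IsLocalization.exist_integer_multiples (nonZeroDivisors R) Finset.univ c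
    choose p hp using fun l => hd l (Finset.mem_univ l)
    have hdv : (d : R) • v = ∑ l, p l • H l := by
      funext j
      apply IsFractionRing.injective R K
      have := congrArg (fun w => algebraMap R K d * w j) hc
      simp only [Finset.sum_apply, Pi.smul_apply, smul_eq_mul, Finset.mul_sum, map_mul,
        map_sum] at this ⊢
      rw [← this]
      refine Finset.sum_congr rfl fun l _ => ?_
      rw [hp l, Algebra.smul_def, mul_assoc]
    have hq : (d : R) • (Submodule.Quotient.mk v : (ν → R) ⧸ span R (Set.range H)) = 0 := by
      rw [← Submodule.Quotient.mk_smul, Submodule.Quotient.mk_eq_zero, hdv]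
      exact sum_mem fun l _ => smul_mem _ _ (subset_span ⟨l, rfl⟩)
    rwa [(isRegular_iff_mem_nonZeroDivisors.2 d.2).smul_eq_zero_iff_right,
      Submodule.Quotient.mk_eq_zero] at hq
  · intro hv
    obtain ⟨c, rfl⟩ := (mem_span_range_iff_exists_fun R).1 hv
    refine (mem_span_range_iff_exists_fun K).2 ⟨fun l => algebraMap R K (c l), ?_⟩
    funext j
    simp [Finset.sum_apply, Algebra.smul_def]

theorem exists_isUnit_det_mul_eq_of_span_eq {R : Type*} [CommRing R] {m ν : Type*} [Fintype m]
    [DecidableEq m] {H H' : m → ν → R} (hH : LinearIndependent R H)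
    (h : span R (Set.range H) = span R (Set.range H')) :
    ∃ T : Matrix m m R, IsUnit T.det ∧ T * Matrix.of H' = Matrix.of H := by
  have mul_eq_of_le : ∀ {X Y : m → ν → R}, span R (Set.range X) ≤ span R (Set.range Y) →
      ∃ T : Matrix m m R, T * Matrix.of Y = Matrix.of X := fun hXY => by
    choose T hT using fun i =>
      (mem_span_range_iff_exists_fun R).1 (hXY (subset_span ⟨i, rfl⟩))
    exact ⟨Matrix.of T, funext fun i => (vecMul_eq_sum _ _).trans (hT i)⟩
  obtain ⟨T, hT⟩ := mul_eq_of_le h.le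
  obtain ⟨S, hS⟩ := mul_eq_of_le h.ge
  have hTS : T * S = 1 := by
    funext i
    refine Matrix.vecMul_injective_iff.2 hH ?_
    exact congrFun (show T * S * Matrix.of H = (1 : Matrix m m R) * Matrix.of H by
      rw [Matrix.mul_assoc, hS, hT, Matrix.one_mul]) i
  exact ⟨T, isUnit_det_of_right_inverse hTS, hT⟩

theorem Polynomial.natDegree_eq_of_associated {R : Type*} [CommRing R] [IsDomain R]
    {p q : R[X]} (h : Associated p q) : p.natDegree = q.natDegree :=
  natDegree_eq_of_degree_eq (degree_eq_degree_of_associated h)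

theorem maxMinorDeg_mul_of_isUnit_det_s13 {F : Type*} [Field F] {m n : ℕ}
    {T : Matrix (Fin m) (Fin m) F[X]} (hT : IsUnit T.det) (G : Fin m → Fin n → F[X]) :
    maxMinorDeg (T * Matrix.of G) = maxMinorDeg G := by
  refine Finset.sup_congr rfl fun g _ => ?_
  change ((T * of G).submatrix id g).det.natDegree = _
  rw [submatrix_mul T (of G) id id g Function.bijective_id, submatrix_id_id, det_mul]
  exact natDegree_eq_of_associated (associated_unit_mul_left _ _ hT)

theorem Matrix.det_mul_det_toBlocks₂₂_of_mul_eq_one {R : Type*} [CommRing R] {α β : Type*}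
    [Fintype α] [Fintype β] [DecidableEq α] [DecidableEq β]
    {A C : Matrix (α ⊕ β) (α ⊕ β) R} (h : A * C = 1) :
    A.det * C.toBlocks₂₂.det = A.toBlocks₁₁.det := by
  have key : A * fromBlocks 1 C.toBlocks₁₂ 0 C.toBlocks₂₂ =
      fromBlocks A.toBlocks₁₁ 0 A.toBlocks₂₁ 1 := by
    ext i (j | j)
    · simp [mul_apply, Fintype.sum_sum_type, one_apply]
      rcases i <;> rfl
    · have hij := congrFun (congrFun h i) (inr j)
      rcases i <;>
        simpa [mul_apply, Fintype.sum_sum_type, one_apply, toBlocks₁₂, toBlocks₂₂] using hij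
  simpa [det_fromBlocks_zero₂₁, det_fromBlocks_zero₁₂] using congrArg det key

theorem Function.Injective.exists_sumEquiv_inl_eq {α β γ : Type*} [Fintype α] [Fintype β]
    [Fintype γ] [DecidableEq γ] {g : α → γ} (hg : Function.Injective g)
    (hcard : Fintype.card α + Fintype.card β = Fintype.card γ) :
    ∃ e : α ⊕ β ≃ γ, e ∘ inl = g := by
  have hcompl : Fintype.card β = Fintype.card ((Set.range g)ᶜ : Set γ) := by
    rw [Fintype.card_compl_set, Set.card_range_of_injective hg]
    omega
  refine ⟨(Equiv.sumCongr (Equiv.ofInjective g hg) (Fintype.equivOfCardEq hcompl)).trans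
    (Equiv.Set.sumCompl (Set.range g)), ?_⟩
  funext a
  simp

theorem associated_det_submatrix_inl_inr {R : Type*} [CommRing R] {α β ν : Type*}
    [Fintype α] [Fintype β] [Fintype ν] [DecidableEq α] [DecidableEq β]
    {P Q : Matrix (α ⊕ β) ν R} (hPQ : P * Qᵀ = 1) (e : α ⊕ β ≃ ν) :
    Associated (P.submatrix inl (e ∘ inl)).det (Q.submatrix inr (e ∘ inr)).det := by
  set A := P.submatrix id e
  have hA : A * (Q.submatrix id e)ᵀ = 1 := by
    rw [transpose_submatrix, ← submatrix_mul _ _ _ _ _ e.bijective, hPQ, submatrix_id_id]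
  have hjacobi := det_mul_det_toBlocks₂₂_of_mul_eq_one hA
  rw [← (Q.submatrix inr (e ∘ inr)).det_transpose]
  change Associated A.toBlocks₁₁.det (Q.submatrix id e)ᵀ.toBlocks₂₂.det
  rw [← hjacobi]
  exact associated_unit_mul_left _ _ (isUnit_det_of_right_inverse hA)

theorem maxMinorDeg_rows_inl_le {F : Type*} [Field F] {k m n : ℕ}
    {P Q : Matrix (Fin k ⊕ Fin m) (Fin n) F[X]} (hPQ : P * Qᵀ = 1) (hn : k + m = n) :
    maxMinorDeg (fun a => P (inl a)) ≤ maxMinorDeg (fun b => Q (inr b)) := by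
  refine Finset.sup_le fun g _ => ?_
  by_cases hg : Function.Injective g
  · obtain ⟨e, rfl⟩ := hg.exists_sumEquiv_inl_eq (β := Fin m) (by simpa using hn)
    calc ((P.submatrix inl (e ∘ inl)).det).natDegree
        = ((Q.submatrix inr (e ∘ inr)).det).natDegree :=
          natDegree_eq_of_associated (associated_det_submatrix_inl_inr hPQ e)
      _ ≤ maxMinorDeg (fun b => Q (inr b)) :=
          Finset.le_sup (f := fun h => ((Q.submatrix inr h).det).natDegree) (Finset.mem_univ _)
  · obtain ⟨i, j, hgij, hij⟩ := Function.not_injective_iff.1 hg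
    rw [det_zero_of_column_eq hij fun _ => by simp [hgij], natDegree_zero]
    exact Nat.zero_le _

theorem maxMinorDeg_rows_inl_eq_inr {F : Type*} [Field F] {k m n : ℕ}
    {P Q : Matrix (Fin k ⊕ Fin m) (Fin n) F[X]} (hPQ : P * Qᵀ = 1) (hn : k + m = n) :
    maxMinorDeg (fun a => P (inl a)) = maxMinorDeg (fun b => Q (inr b)) := by
  have hQP : Q * Pᵀ = 1 := by
    rw [← transpose_transpose Q, ← transpose_mul, hPQ, transpose_one]
  -- the reverse inequality is the same one for `(Q, P)`, with the two row blocks swapped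
  have hswap :
      Q.submatrix (Equiv.sumComm _ _) id * (P.submatrix (Equiv.sumComm _ _) id)ᵀ = 1 := by
    rw [transpose_submatrix, ← submatrix_mul _ _ _ _ _ Function.bijective_id, hQP,
      submatrix_one_equiv]
  have hge := maxMinorDeg_rows_inl_le hswap (by omega)
  exact le_antisymm (maxMinorDeg_rows_inl_le hPQ hn) hge

theorem dual_code_dimension_and_degree_general
    {F : Type*} [Field F]
    (n k δ : ℕ)
    (C : Submodule (RatFunc F) (Fin n → RatFunc F))
    -- C has degree δ: δ is the maximum minor degree of some (hence any) basic
    -- generator matrix G₀ of C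
    (G₀ : Fin k → Fin n → Polynomial F)
    (hG₀rank : LinearIndependent (Polynomial F) G₀)
    (hG₀span : Submodule.span (RatFunc F) (Set.range fun i => liftVec (G₀ i)) = C)
    (hG₀basic : Module.Free (Polynomial F)
      ((Fin n → Polynomial F) ⧸ Submodule.span (Polynomial F) (Set.range G₀)))
    (hδ : maxMinorDeg G₀ = δ) :
    -- C^⊥ is a convolutional code of length n and dimension n−k …
    Module.finrank (RatFunc F) (dualCode C) = n - k ∧
    -- … of the same degree δ: any basic generator matrix H of C^⊥ has
    -- maximum minor degree δ
    ∀ H : Fin (n - k) → Fin n → Polynomial F,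
      LinearIndependent (Polynomial F) H →
      Submodule.span (RatFunc F) (Set.range fun l => liftVec (H l)) = dualCode C →
      Module.Free (Polynomial F)
        ((Fin n → Polynomial F) ⧸ Submodule.span (Polynomial F) (Set.range H)) →
      maxMinorDeg H = δ := by
  have hkn : k ≤ n := by simpa using hG₀rank.fintype_card_le_finrank
  obtain ⟨P, Q, rfl, hPQ, hQP⟩ :=
    exists_mul_transpose_eq_one_of_free_quotient G₀ hG₀rank hG₀basic
  subst hG₀span hδ
  set f := algebraMap F[X] (RatFunc F)
  have hPQK : P.map f * (Q.map f)ᵀ = 1 := by rw [← transpose_map]; exact map_mul_eq_one f hPQ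
  have hQPK : (Q.map f)ᵀ * P.map f = 1 := by rw [← transpose_map]; exact map_mul_eq_one f hQP
  have hdual : dualCode (span (RatFunc F) (Set.range fun a => liftVec (P (inl a)))) =
      span (RatFunc F) (Set.range fun b => liftVec (Q (inr b))) :=
    dualCode_span_rows_inl (P := P.map f) (Q := Q.map f) hPQK hQPK
  refine ⟨?_, fun H hH hHspan hHbasic => ?_⟩
  · rw [hdual]
    exact (finrank_span_eq_card (linearIndependent_rows_inr_of_mul_transpose_eq_one hPQK)).trans
      (Fintype.card_fin _)
  have hspan : span F[X] (Set.range H) = span F[X] (Set.range fun b => Q (inr b)) := by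
    ext v
    rw [← algebraMap_mem_span_iff_of_isTorsionFree (K := RatFunc F) H,
      ← algebraMap_mem_span_rows_inr_iff (K := RatFunc F) hPQ hQP]
    exact Iff.of_eq (congrArg (_ ∈ ·) (hHspan.trans hdual))
  obtain ⟨T, hT, hTH⟩ := exists_isUnit_det_mul_eq_of_span_eq hH hspan
  have hHW := congrArg maxMinorDeg hTH
  rw [maxMinorDeg_mul_of_isUnit_det_s13 hT] at hHW
  exact hHW.symm.trans (maxMinorDeg_rows_inl_eq_inr hPQ (by omega)).symm

theorem dual_code_dimension_and_degree
    {F : Type*} [Field F] [Fintype F]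
    (n k δ : ℕ) (hkn : k < n)
    (C : Submodule (RatFunc F) (Fin n → RatFunc F))
    (hC : Module.finrank (RatFunc F) C = k)
    -- C has degree δ: δ is the maximum minor degree of some (hence any) basic
    -- generator matrix G₀ of C
    (G₀ : Fin k → Fin n → Polynomial F)
    (hG₀rank : LinearIndependent (Polynomial F) G₀)
    (hG₀span : Submodule.span (RatFunc F) (Set.range fun i => liftVec (G₀ i)) = C)
    (hG₀basic : Module.Free (Polynomial F)
      ((Fin n → Polynomial F) ⧸ Submodule.span (Polynomial F) (Set.range G₀)))
    (hδ : maxMinorDeg G₀ = δ) :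
    -- C^⊥ is a convolutional code of length n and dimension n−k …
    Module.finrank (RatFunc F) (dualCode C) = n - k ∧
    -- … of the same degree δ: any basic generator matrix H of C^⊥ has
    -- maximum minor degree δ
    ∀ H : Fin (n - k) → Fin n → Polynomial F,
      LinearIndependent (Polynomial F) H →
      Submodule.span (RatFunc F) (Set.range fun l => liftVec (H l)) = dualCode C →
      Module.Free (Polynomial F)
        ((Fin n → Polynomial F) ⧸ Submodule.span (Polynomial F) (Set.range H)) →
      maxMinorDeg H = δ :=
  dual_code_dimension_and_degree_general n k δ C G₀ hG₀rank hG₀span hG₀basic hδ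
end
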